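/- arXiv:1307.1447 — 3 statements merged into one kernel-verified Lean document; each statement's English description precedes it below -/
import Mathlib

section
/- Let A be a sequence of n real numbers, x a real, p ∈ {1,...,n}, and B = ins(A,p,x). Then MS(B,p) = x + max(0, MS(A,p-1)); and if p = 0, then MS(B,0) = x. -/
noncomputable section

/-- Sum of the contiguous subsequence A[j..i]. -/
def seg (A : ℕ → ℝ) (j i : ℕ) : ℝ := ∑ t ∈ Finset.Icc j i, A t

/-- Maximal sum at element i: max over j ≤ i of sum A[j..i]. -/
def MS (A : ℕ → ℝ) (i : ℕ) : ℝ :=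
  (Finset.range (i+1)).sup' (Finset.nonempty_range_iff.mpr (Nat.succ_ne_zero i))
    (fun j => seg A j i)

/-- Maximal sum of a contiguous, possibly empty, subsequence of A[0..n-1]. -/
def maxsum (A : ℕ → ℝ) (n : ℕ) : ℝ :=
  Finset.fold max 0 (fun q => seg A q.1 q.2)
    (Finset.filter (fun q => q.1 ≤ q.2) ((Finset.range n) ×ˢ (Finset.range n)))

/-- Insertion of x between A[p-1] and A[p]. -/
def ins (A : ℕ → ℝ) (p : ℕ) (x : ℝ) : ℕ → ℝ :=
  fun i => if i < p then A i else if i = p then x else A (i - 1)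

/-- Sum of the circular subsequence A⟨j..i⟩ of a sequence of length n. -/
def circseg (A : ℕ → ℝ) (n j i : ℕ) : ℝ :=
  if j ≤ i then seg A j i else seg A j (n-1) + seg A 0 i

/-- Maximal circular sum at element i. -/
def MCS (A : ℕ → ℝ) (n i : ℕ) : ℝ :=
  if h : 0 < n then
    (Finset.range n).sup' (Finset.nonempty_range_iff.mpr h.ne')
      (fun j => circseg A n j i)
  else 0

/-- Maximal circular sum of a possibly empty circular subsequence. -/
def mcs (A : ℕ → ℝ) (n : ℕ) : ℝ :=
  Finset.fold max 0 (fun q => circseg A n q.1 q.2)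
    ((Finset.range n) ×ˢ (Finset.range n))

/-- OMCS A n i = i ⊖ j*, where j* is the largest j with sum A⟨(i⊖j)..i⟩ = MCS A n i. -/
def OMCS (A : ℕ → ℝ) (n i : ℕ) : ℕ :=
  (i + n - ((Finset.filter
      (fun j => circseg A n ((i + n - j) % n) i = MCS A n i)
      (Finset.range n)).max.getD 0)) % n

/-- h belongs to the circular range from a to b (indices mod n). -/
def inCircRange (n a b h : ℕ) : Prop :=
  (a ≤ b ∧ a ≤ h ∧ h ≤ b) ∨ (b < a ∧ ((a ≤ h ∧ h < n) ∨ h ≤ b))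

/-- The (noncircular) interval partition of A into L intervals A[α i .. β i]. -/
def IntervalPartition (A : ℕ → ℝ) (n L : ℕ) (α β : ℕ → ℕ) : Prop :=
  0 < L ∧ 0 < n ∧ α 0 = 0 ∧ β (L-1) = n-1 ∧
  (∀ i, i + 1 < L → α (i+1) = β i + 1) ∧
  (∀ i, i < L → α i ≤ β i) ∧
  (∀ i, i < L → ∀ j, α i ≤ j → j ≤ β i →
     (j ≠ β i → 0 ≤ MS A j) ∧ (j = β i → i < L - 1 → MS A j < 0))

lemma seg_ins_self (A : ℕ → ℝ) (p : ℕ) (x : ℝ) : seg (ins A p x) p p = x := by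
  simp [seg, ins]

lemma seg_ins_lt (A : ℕ → ℝ) (p : ℕ) (x : ℝ) (hp : 1 ≤ p) (j : ℕ) (hj : j ≤ p - 1) :
    seg (ins A p x) j p = x + seg A j (p-1) := by
  have hp1 : p - 1 + 1 = p := Nat.succ_pred_eq_of_pos hp
  have hstep := Finset.sum_Icc_succ_top (f := ins A p x) (a := j) (b := p-1) (by omega)
  rw [hp1] at hstep
  unfold seg
  rw [hstep]
  have hcong : ∑ t ∈ Finset.Icc j (p-1), ins A p x t = ∑ t ∈ Finset.Icc j (p-1), A t := by
    refine Finset.sum_congr rfl fun t ht => ?_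
    have := (Finset.mem_Icc.mp ht).2
    simp only [ins, if_pos (by omega : t < p)]
  rw [hcong]
  have : ins A p x p = x := by simp [ins]
  rw [this]; ring

lemma le_MS (A : ℕ → ℝ) (i j : ℕ) (hj : j ≤ i) : seg A j i ≤ MS A i := by
  unfold MS
  exact Finset.le_sup' (fun j => seg A j i) (Finset.mem_range.mpr (by omega))

theorem stmt4 (A : ℕ → ℝ) (n : ℕ) (x : ℝ) :
    (∀ p, 1 ≤ p → p ≤ n → MS (ins A p x) p = x + max 0 (MS A (p-1))) ∧
    MS (ins A 0 x) 0 = x := by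
  constructor
  · intro p hp hpn
    have hp1 : p - 1 + 1 = p := Nat.succ_pred_eq_of_pos hp
    apply le_antisymm
    · apply Finset.sup'_le
      intro j hj
      rcases Finset.mem_range.mp hj with hj'
      rcases eq_or_lt_of_le (Nat.lt_succ_iff.mp hj') with h | h
      · rw [h, seg_ins_self]
        have : (0:ℝ) ≤ max 0 (MS A (p-1)) := le_max_left _ _
        linarith
      · rw [seg_ins_lt A p x hp j (by omega)]
        have h1 : seg A j (p-1) ≤ MS A (p-1) := le_MS A (p-1) j (by omega)
        have h2 : MS A (p-1) ≤ max 0 (MS A (p-1)) := le_max_right _ _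
        linarith
    · rcases le_or_gt (MS A (p-1)) 0 with h | h
      · rw [max_eq_left h]
        have : seg (ins A p x) p p ≤ MS (ins A p x) p := le_MS _ p p le_rfl
        rw [seg_ins_self] at this
        linarith
      · rw [max_eq_right h.le]
        obtain ⟨j, hj, hje⟩ := Finset.exists_mem_eq_sup' (Finset.nonempty_range_iff.mpr (Nat.succ_ne_zero (p-1))) (fun j => seg A j (p-1))
        have hjp : j ≤ p - 1 := by
          have := Finset.mem_range.mp hj; omega
        have : seg (ins A p x) j p ≤ MS (ins A p x) p := le_MS _ p j (by omega)
        rw [seg_ins_lt A p x hp j hjp] at this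
        have hMS : MS A (p-1) = seg A j (p-1) := hje
        rw [hMS]
        linarith
  · simp [MS, seg, ins]
end
end

section
/- Let A be a sequence of n real numbers with interval partition I_0,...,I_{λ-1}, let x ≥ 0 be real, p ∈ {0,...,n-1}, and let I_k be the interval containing p. Assume k < λ-1, and let B = ins(A,p,x). Then the maximum of MS(B, i+1) over all i with β_k < i < n equals max( max over β_k < i < n of MS(A,i), x + sum(I_k) + max over β_k < i < n of sum of A[β_k+1 .. i] ). -/
/-!
Since `MS(A, α_k - 1) < 0` (or `α_k = 0`) and `MS(A, j) ≥ 0` for `α_k ≤ j < β_k`, Kadane's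
recursion `MS(A, j+1) = max(A[j+1], MS(A, j) + A[j+1])` makes `MS(A, j)` the running sum from
`α_k` on `I_k`; so `MS(A, β_k) = sum(I_k)`, and no segment ending at `β_k` beats `I_k`.
For `i > β_k`, a segment of `B` ending at `i + 1` either starts after the inserted `x`, and is
then a segment of `A` ending at `i`, or contains `x`, and then the best choice is
`x + sum(I_k) + sum A[β_k+1..i]`. Taking the maximum over `i` splits into the two maxima of the
claim.
-/

noncomputable section

section seg

variable (A : ℕ → ℝ)

lemma seg_eq_sum_Ico (j i : ℕ) : seg A j i = ∑ t ∈ Finset.Ico j (i + 1), A t := by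
  rw [seg, Finset.Ico_add_one_right_eq_Icc]

lemma seg_self (a : ℕ) : seg A a a = A a := by simp [seg]

lemma seg_add_seg {j m i : ℕ} (hjm : j ≤ m + 1) (hmi : m ≤ i) :
    seg A j m + seg A (m + 1) i = seg A j i := by
  simp only [seg_eq_sum_Ico]
  exact Finset.sum_Ico_consecutive A hjm (by omega)

lemma seg_succ_right {j i : ℕ} (hji : j ≤ i + 1) : seg A j (i + 1) = seg A j i + A (i + 1) := by
  rw [← seg_add_seg A hji (Nat.le_succ i), seg_self]

end seg

section MS

variable (A : ℕ → ℝ)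

lemma seg_le_MS {j i : ℕ} (hji : j ≤ i) : seg A j i ≤ MS A i :=
  Finset.le_sup' (fun j => seg A j i) (Finset.mem_range.mpr (by omega))

lemma MS_le_iff {i : ℕ} {c : ℝ} : MS A i ≤ c ↔ ∀ j ≤ i, seg A j i ≤ c := by
  simp [MS, Finset.sup'_le_iff]

lemma exists_seg_eq_MS (i : ℕ) : ∃ j ≤ i, seg A j i = MS A i := by
  obtain ⟨j, hj, hmax⟩ := Finset.exists_mem_eq_sup' (Finset.nonempty_range_iff.mpr
    (Nat.succ_ne_zero i)) (fun j => seg A j i)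
  exact ⟨j, Nat.lt_succ_iff.mp (Finset.mem_range.mp hj), hmax.symm⟩

lemma MS_zero : MS A 0 = A 0 := by
  simp [MS, seg_self]

lemma MS_succ (i : ℕ) : MS A (i + 1) = max (A (i + 1)) (MS A i + A (i + 1)) := by
  have hne : (Finset.range (i + 1)).Nonempty := Finset.nonempty_range_iff.mpr i.succ_ne_zero
  rw [MS, Finset.sup'_congr _ Finset.range_add_one (fun _ _ => rfl), Finset.sup'_insert,
    seg_self, MS, Finset.sup'_add _ _ _ hne]
  congr 1
  exact Finset.sup'_congr hne rfl fun j hj =>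
    seg_succ_right A (by have := Finset.mem_range.mp hj; omega)

lemma MS_eq_seg_of_nonneg {a b : ℕ} (hab : a ≤ b) (ha : MS A a = A a)
    (hnonneg : ∀ j, a ≤ j → j < b → 0 ≤ MS A j) : MS A b = seg A a b := by
  induction b, hab using Nat.le_induction with
  | base => rw [ha, seg_self]
  | succ b hab ih =>
    have hb := ih fun j hj hjb => hnonneg j hj (by omega)
    have hpos := hnonneg b hab (by omega)
    rw [hb] at hpos
    rw [MS_succ, hb, seg_succ_right A (by omega)]
    exact max_eq_right (by linarith)

end MS

section ins

variable (A : ℕ → ℝ) {p : ℕ} (x : ℝ)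

lemma seg_ins_succ {m : ℕ} (hpm : p ≤ m) (i : ℕ) :
    seg (ins A p x) (m + 1) (i + 1) = seg A m i := by
  simp only [seg_eq_sum_Ico, ← Finset.sum_Ico_add']
  refine Finset.sum_congr rfl fun t ht => ?_
  have := (Finset.mem_Ico.mp ht).1
  simp only [ins, if_neg (show ¬ t + 1 < p by omega), if_neg (show t + 1 ≠ p by omega),
    Nat.add_sub_cancel]

lemma seg_ins_of_le {j i : ℕ} (hjp : j ≤ p) (hpi : p ≤ i) :
    seg (ins A p x) j (i + 1) = x + seg A j i := by
  have hlow : ∑ t ∈ Finset.Ico j p, ins A p x t = ∑ t ∈ Finset.Ico j p, A t :=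
    Finset.sum_congr rfl fun t ht => if_pos (Finset.mem_Ico.mp ht).2
  have hins_p : ins A p x p = x := by simp [ins]
  calc seg (ins A p x) j (i + 1)
      = ∑ t ∈ Finset.Ico j p, ins A p x t + ∑ t ∈ Finset.Ico p (i + 2), ins A p x t := by
        rw [seg_eq_sum_Ico, Finset.sum_Ico_consecutive _ hjp (by omega)]
    _ = ∑ t ∈ Finset.Ico j p, A t + (x + seg A p i) := by
        rw [hlow, Finset.sum_eq_sum_Ico_succ_bot (show p < i + 2 by omega), hins_p,
          ← seg_eq_sum_Ico, seg_ins_succ A x le_rfl]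
    _ = x + seg A j i := by
        rw [seg_eq_sum_Ico A j, ← Finset.sum_Ico_consecutive _ hjp (by omega : p ≤ i + 1),
          ← seg_eq_sum_Ico]
        ring

lemma MS_ins_succ {j₀ i : ℕ} (hx : 0 ≤ x) (hj₀p : j₀ ≤ p) (hpi : p ≤ i)
    (hj₀ : ∀ j ≤ p, seg A j i ≤ seg A j₀ i) :
    MS (ins A p x) (i + 1) = max (MS A i) (x + seg A j₀ i) := by
  apply le_antisymm
  · rw [MS_le_iff]
    intro j hj
    rcases le_or_gt j p with hjp | hpj
    · rw [seg_ins_of_le A x hjp hpi]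
      exact le_max_of_le_right (by linarith [hj₀ j hjp])
    · obtain ⟨m, rfl⟩ : ∃ m, j = m + 1 := ⟨j - 1, by omega⟩
      rw [seg_ins_succ A x (by omega)]
      exact le_max_of_le_left (seg_le_MS A (by omega))
  · refine max_le ?_ ?_
    · obtain ⟨j, hji, hj⟩ := exists_seg_eq_MS A i
      rw [← hj]
      rcases le_or_gt j p with hjp | hpj
      · calc seg A j i ≤ x + seg A j i := by linarith
          _ = seg (ins A p x) j (i + 1) := (seg_ins_of_le A x hjp hpi).symm
          _ ≤ _ := seg_le_MS _ (by omega)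
      · rw [← seg_ins_succ A x hpj.le]
        exact seg_le_MS _ (by omega)
    · rw [← seg_ins_of_le A x hj₀p hpi]
      exact seg_le_MS _ (by omega)

end ins

namespace IntervalPartition

variable {A : ℕ → ℝ} {n L : ℕ} {α β : ℕ → ℕ}

lemma α_le_β (hP : IntervalPartition A n L α β) {k : ℕ} (hk : k < L) : α k ≤ β k :=
  hP.2.2.2.2.2.1 k hk

lemma MS_nonneg (hP : IntervalPartition A n L α β) {k j : ℕ} (hk : k < L) (hj : α k ≤ j)
    (hjk : j < β k) : 0 ≤ MS A j :=
  (hP.2.2.2.2.2.2 k hk j hj hjk.le).1 hjk.ne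

lemma β_mono (hP : IntervalPartition A n L α β) {i j : ℕ} (hij : i ≤ j) (hj : j < L) :
    β i ≤ β j := by
  obtain ⟨-, -, -, -, hnext, hαβ, -⟩ := hP
  induction j, hij using Nat.le_induction with
  | base => rfl
  | succ j hij ih =>
    have := hnext j hj
    have := hαβ (j + 1) hj
    have := ih (by omega)
    omega

lemma β_add_one_lt (hP : IntervalPartition A n L α β) {k : ℕ} (hk : k < L - 1) :
    β k + 1 < n := by
  have hlast := hP.β_mono (show k + 1 ≤ L - 1 by omega) (by omega)
  obtain ⟨-, hn, -, hβL, hnext, hαβ, -⟩ := hP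
  have := hnext k (by omega)
  have := hαβ (k + 1) (by omega)
  omega

lemma MS_α (hP : IntervalPartition A n L α β) {k : ℕ} (hk : k < L) :
    MS A (α k) = A (α k) := by
  obtain ⟨-, -, hα0, -, hnext, hαβ, hMS⟩ := hP
  rcases k with _ | m
  · rw [hα0, MS_zero]
  · have hneg := (hMS m (by omega) (β m) (hαβ m (by omega)) le_rfl).2 rfl (by omega)
    rw [hnext m hk, MS_succ]
    exact max_eq_left (by linarith)

lemma MS_β (hP : IntervalPartition A n L α β) {k : ℕ} (hk : k < L) :
    MS A (β k) = seg A (α k) (β k) :=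
  MS_eq_seg_of_nonneg A (hP.α_le_β hk) (hP.MS_α hk) fun _ hj hjk => hP.MS_nonneg hk hj hjk

lemma seg_le_seg_α (hP : IntervalPartition A n L α β) {k j : ℕ} (hk : k < L)
    (hj : j ≤ β k) :
    seg A j (β k) ≤ seg A (α k) (β k) :=
  hP.MS_β hk ▸ seg_le_MS A hj

end IntervalPartition

lemma sSup_setOf_Ioo_eq_sup' {γ : Type*} [ConditionallyCompleteLattice γ] (f : ℕ → γ)
    {a n : ℕ} (h : a + 1 < n) :
    sSup {v | ∃ i, a < i ∧ i < n ∧ v = f i} =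
      (Finset.Ioo a n).sup' (show (Finset.Ioo a n).Nonempty from
        ⟨a + 1, Finset.mem_Ioo.mpr ⟨by omega, h⟩⟩) f := by
  rw [Finset.sup'_eq_csSup_image, Finset.coe_Ioo]
  congr 1
  ext v
  simp [eq_comm, and_assoc]

lemma Finset.sup'_sup {ι γ : Type*} [SemilatticeSup γ] {s : Finset ι} (hs : s.Nonempty)
    (f g : ι → γ) : s.sup' hs (f ⊔ g) = s.sup' hs f ⊔ s.sup' hs g :=
  le_antisymm (sup'_le _ _ fun _ hb => sup_le_sup (le_sup' f hb) (le_sup' g hb))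
    (sup_le (sup'_mono_fun fun _ _ => le_sup_left) (sup'_mono_fun fun _ _ => le_sup_right))

theorem stmt6_general (A : ℕ → ℝ) (n L : ℕ) (α β : ℕ → ℕ)
    (hip : IntervalPartition A n L α β)
    (x : ℝ) (hx : 0 ≤ x) (p k : ℕ)
    (hk : k < L) (hk' : k < L - 1) (hpk : α k ≤ p ∧ p ≤ β k) :
    sSup {v | ∃ i, β k < i ∧ i < n ∧ v = MS (ins A p x) (i+1)} =
      max (sSup {v | ∃ i, β k < i ∧ i < n ∧ v = MS A i})
          (x + seg A (α k) (β k) +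
            sSup {v | ∃ i, β k < i ∧ i < n ∧ v = seg A (β k + 1) i}) := by
  have hn := hip.β_add_one_lt hk'
  have hpoint : ∀ i ∈ Finset.Ioo (β k) n, MS (ins A p x) (i + 1) =
      max (MS A i) (x + seg A (α k) (β k) + seg A (β k + 1) i) := by
    intro i hi
    have hki : β k < i := (Finset.mem_Ioo.mp hi).1
    have hsplit : ∀ j ≤ β k, seg A j (β k) + seg A (β k + 1) i = seg A j i :=
      fun j hj => seg_add_seg A (by omega) hki.le
    rw [add_assoc, hsplit _ (hip.α_le_β hk)]
    refine MS_ins_succ A x hx hpk.1 (by omega) fun j hj => ?_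
    rw [← hsplit j (by omega), ← hsplit (α k) (hip.α_le_β hk)]
    linarith [hip.seg_le_seg_α hk (show j ≤ β k by omega)]
  rw [sSup_setOf_Ioo_eq_sup' _ hn, sSup_setOf_Ioo_eq_sup' _ hn, sSup_setOf_Ioo_eq_sup' _ hn,
    Finset.sup'_congr _ rfl hpoint, Finset.add_sup']
  exact Finset.sup'_sup _ _ _

theorem stmt6 (A : ℕ → ℝ) (n L : ℕ) (α β : ℕ → ℕ)
    (hip : IntervalPartition A n L α β)
    (x : ℝ) (hx : 0 ≤ x) (p k : ℕ) (hp : p < n)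
    (hk : k < L) (hk' : k < L - 1) (hpk : α k ≤ p ∧ p ≤ β k) :
    sSup {v | ∃ i, β k < i ∧ i < n ∧ v = MS (ins A p x) (i+1)} =
      max (sSup {v | ∃ i, β k < i ∧ i < n ∧ v = MS A i})
          (x + seg A (α k) (β k) +
            sSup {v | ∃ i, β k < i ∧ i < n ∧ v = seg A (β k + 1) i}) :=
  stmt6_general A n L α β hip x hx p k hk hk' hpk
end
end

section
/- Let A be a sequence of n ≥ 1 real numbers with both positive and negative elements, and suppose MCS(A,i) ≥ 0 for all i (A is of 'type 3'). If for some index i, OMCS(A,i) ≠ i ⊕ 1, then OMCS(A, i ⊕ 1) = OMCS(A,i), where ⊕ is addition mod n. -/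
noncomputable section

/-! If `OMCS A n i ≠ i ⊕ 1`, the whole circle is not an optimal segment ending at `i`, so some
optimal segment ending at `i` starts at `s ≠ i ⊕ 1`. Extending it by `A (i ⊕ 1)` shows
`MCS A n (i ⊕ 1) = MCS A n i + A (i ⊕ 1)`; the one-element segment `A (i ⊕ 1)` cannot beat this
because `MCS A n i ≥ 0`. Hence the optimal segments ending at `i ⊕ 1` of length at least two are
exactly the optimal segments ending at `i` extended by one element: the largest optimal length
grows by one and the leftmost optimal start stays where it was. -/

open Finset

section ModArith

variable {n i : ℕ}

lemma mod_eq_ite_of_lt_two_mul {x : ℕ} (h : x < 2 * n) :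
    x % n = if n ≤ x then x - n else x := by
  split_ifs with hx
  · rw [Nat.mod_eq_sub_mod hx]; exact Nat.mod_eq_of_lt (by omega)
  · exact Nat.mod_eq_of_lt (by omega)

lemma succ_mod_add_sub_succ_mod {j : ℕ} (hi : i < n) (hj : j < n) :
    ((i + 1) % n + n - (j + 1)) % n = (i + n - j) % n := by
  rw [mod_eq_ite_of_lt_two_mul (x := i + 1) (by omega)]
  split_ifs <;>
    · rw [mod_eq_ite_of_lt_two_mul (by omega),
        mod_eq_ite_of_lt_two_mul (x := i + n - j) (by omega)]
      split_ifs <;> omega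

lemma add_sub_mod_ne_succ_mod {j : ℕ} (hi : i < n) (hj : j + 1 < n) :
    (i + n - j) % n ≠ (i + 1) % n := by
  rw [mod_eq_ite_of_lt_two_mul (by omega),
    mod_eq_ite_of_lt_two_mul (x := i + 1) (by omega)]
  split_ifs <;> omega

lemma add_sub_add_sub_mod_mod {s : ℕ} (hi : i < n) (hs : s < n) :
    (i + n - (i + n - s) % n) % n = s := by
  rw [mod_eq_ite_of_lt_two_mul (x := i + n - s) (by omega)]
  split_ifs <;>
    · rw [mod_eq_ite_of_lt_two_mul (by omega)]
      split_ifs <;> omega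

end ModArith

section CircularSums

variable {A : ℕ → ℝ} {n : ℕ}

lemma circseg_self (j : ℕ) : circseg A n j j = A j := by
  simp [circseg, seg]

lemma circseg_succ_mod {i s : ℕ} (hi : i < n) (hs : s < n) (hne : s ≠ (i + 1) % n) :
    circseg A n s ((i + 1) % n) = circseg A n s i + A ((i + 1) % n) := by
  rcases Nat.lt_or_ge (i + 1) n with hlt | hge
  · rw [Nat.mod_eq_of_lt hlt] at hne ⊢
    unfold circseg
    by_cases hsi : s ≤ i
    · rw [if_pos hsi, if_pos (by omega)]
      exact Finset.sum_Icc_succ_top (by omega) A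
    · rw [if_neg hsi, if_neg (by omega)]
      simp only [seg]
      rw [Finset.sum_Icc_succ_top (by omega : 0 ≤ i + 1)]
      ring
  · obtain rfl : n = i + 1 := by omega
    rw [Nat.mod_self] at hne ⊢
    simp only [circseg, if_neg (Nat.pos_of_ne_zero hne).not_ge, if_pos (by omega : s ≤ i),
      Nat.add_sub_cancel, seg, Finset.Icc_self, Finset.sum_singleton]

lemma circseg_le_MCS (hn : 0 < n) (i : ℕ) {j : ℕ} (hj : j < n) :
    circseg A n j i ≤ MCS A n i := by
  rw [MCS, dif_pos hn]
  exact Finset.le_sup' (fun j => circseg A n j i) (Finset.mem_range.mpr hj)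

lemma MCS_le {i : ℕ} {c : ℝ} (hn : 0 < n) (hc : ∀ j < n, circseg A n j i ≤ c) :
    MCS A n i ≤ c := by
  rw [MCS, dif_pos hn]
  exact Finset.sup'_le _ _ fun j hj => hc j (Finset.mem_range.mp hj)

lemma exists_circseg_eq_MCS (hn : 0 < n) (i : ℕ) :
    ∃ j < n, circseg A n j i = MCS A n i := by
  rw [MCS, dif_pos hn]
  obtain ⟨j, hj, hje⟩ := Finset.exists_mem_eq_sup' (Finset.nonempty_range_iff.mpr hn.ne')
    (fun j => circseg A n j i)
  exact ⟨j, Finset.mem_range.mp hj, hje.symm⟩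

lemma MCS_succ_mod {i s : ℕ} (hi : i < n) (hs : s < n) (hne : s ≠ (i + 1) % n)
    (hsmax : circseg A n s i = MCS A n i) (h0 : 0 ≤ MCS A n i) :
    MCS A n ((i + 1) % n) = MCS A n i + A ((i + 1) % n) := by
  have hn : 0 < n := by omega
  apply le_antisymm
  · refine MCS_le hn fun j hj => ?_
    rcases eq_or_ne j ((i + 1) % n) with rfl | hj'
    · rw [circseg_self]; linarith
    · rw [circseg_succ_mod hi hj hj']
      linarith [circseg_le_MCS (A := A) hn i hj]
  · have := circseg_le_MCS (A := A) hn ((i + 1) % n) hs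
    rwa [circseg_succ_mod hi hs hne, hsmax] at this

end CircularSums

section Offsets

variable {A : ℕ → ℝ} {n : ℕ}

/-- Offset `j` stands for the circular segment of length `j + 1` ending at `k`, as in `OMCS`. -/
def optOffsets (A : ℕ → ℝ) (n k : ℕ) : Finset ℕ :=
  (range n).filter fun j => circseg A n ((k + n - j) % n) k = MCS A n k

lemma optOffsets_nonempty {k : ℕ} (hk : k < n) : (optOffsets A n k).Nonempty := by
  have hn : 0 < n := by omega
  obtain ⟨s, hs, hsmax⟩ := exists_circseg_eq_MCS (A := A) hn k
  refine ⟨(k + n - s) % n, mem_filter.mpr ⟨mem_range.mpr (Nat.mod_lt _ hn), ?_⟩⟩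
  rwa [add_sub_add_sub_mod_mod hk hs]

lemma OMCS_eq_of_isGreatest {k m : ℕ} (hm : IsGreatest (optOffsets A n k : Set ℕ) m) :
    OMCS A n k = (k + n - m) % n := by
  have hne : (optOffsets A n k).Nonempty := ⟨m, hm.1⟩
  have hmax : (optOffsets A n k).max = m := by
    rw [← coe_max' hne, (isGreatest_max' _ hne).unique hm]
    rfl
  rw [OMCS, ← optOffsets, hmax]
  rfl

lemma succ_mem_optOffsets_succ_mod_iff {i j : ℕ} (hi : i < n) (hj : j + 1 < n)
    (hMCS : MCS A n ((i + 1) % n) = MCS A n i + A ((i + 1) % n)) :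
    j + 1 ∈ optOffsets A n ((i + 1) % n) ↔ j ∈ optOffsets A n i := by
  simp only [optOffsets, mem_filter, mem_range, hj, (by omega : j < n), true_and]
  rw [succ_mod_add_sub_succ_mod hi (by omega),
    circseg_succ_mod hi (Nat.mod_lt _ (by omega)) (add_sub_mod_ne_succ_mod hi hj), hMCS,
    add_left_inj]

lemma isGreatest_optOffsets_succ_mod {i m : ℕ} (hi : i < n) (h0 : 0 ≤ MCS A n i)
    (hm : IsGreatest (optOffsets A n i : Set ℕ) m) (hmn : m + 1 < n) :
    IsGreatest (optOffsets A n ((i + 1) % n) : Set ℕ) (m + 1) := by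
  have hMCS : MCS A n ((i + 1) % n) = MCS A n i + A ((i + 1) % n) :=
    MCS_succ_mod hi (Nat.mod_lt _ (by omega)) (add_sub_mod_ne_succ_mod hi hmn)
      (mem_filter.mp hm.1).2 h0
  refine ⟨(succ_mem_optOffsets_succ_mod_iff hi hmn hMCS).mpr hm.1, fun j hj => ?_⟩
  obtain _ | k := j
  · omega
  · have hkn : k + 1 < n := mem_range.mp (mem_filter.mp hj).1
    exact Nat.succ_le_succ (hm.2 ((succ_mem_optOffsets_succ_mod_iff hi hkn hMCS).mp hj))

end Offsets

theorem stmt13_general (A : ℕ → ℝ) (n : ℕ)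
    (htype3 : ∀ i, i < n → 0 ≤ MCS A n i)
    (i : ℕ) (hi : i < n) (h : OMCS A n i ≠ (i + 1) % n) :
    OMCS A n ((i + 1) % n) = OMCS A n i := by
  obtain ⟨m, hm⟩ : ∃ m, IsGreatest (optOffsets A n i : Set ℕ) m :=
    ⟨_, isGreatest_max' _ (optOffsets_nonempty hi)⟩
  have hmn : m + 1 < n := by
    have hm_lt : m < n := mem_range.mp (mem_filter.mp hm.1).1
    have hm_ne : m ≠ n - 1 := by
      rintro hm_eq
      exact h (by rw [OMCS_eq_of_isGreatest hm, hm_eq]; congr 1; omega)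
    omega
  rw [OMCS_eq_of_isGreatest (isGreatest_optOffsets_succ_mod hi (htype3 i hi) hm hmn),
    OMCS_eq_of_isGreatest hm, succ_mod_add_sub_succ_mod hi (by omega)]

theorem stmt13 (A : ℕ → ℝ) (n : ℕ) (hn : 1 ≤ n)
    (hpos : ∃ i, i < n ∧ 0 < A i) (hneg : ∃ i, i < n ∧ A i < 0)
    (htype3 : ∀ i, i < n → 0 ≤ MCS A n i)
    (i : ℕ) (hi : i < n) (h : OMCS A n i ≠ (i + 1) % n) :
    OMCS A n ((i + 1) % n) = OMCS A n i :=
  stmt13_general A n htype3 i hi h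
end
end
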